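/- Let A be an n×n real matrix and H_s an m_s×n real matrix with rank of the observability matrix O(A,H_s) equal to n₁, where 0 < n₁ < n. Suppose T is an invertible n×n real matrix such that 𝒜 = T·A·T⁻¹ satisfies 𝒜(i,j) = 0 for i < n₁ ≤ j, ℋ = H_s·T⁻¹ satisfies ℋ(i,j) = 0 for j ≥ n₁, and x ∈ ⋂_{k=0}^{n-1} ker(H_s·Aᵏ) if and only if the first n₁ coordinates of T·x vanish. Let 𝒜_o be the top-left n₁×n₁ block of 𝒜 and ℋ_o the m_s×n₁ matrix of the first n₁ columns of ℋ. Then the reduced pair (𝒜_o, ℋ_o) is completely observable: the observability matrix [ℋ_o; ℋ_o·𝒜_o; …; ℋ_o·𝒜_o^{n₁−1}] has rank n₁ (equivalently, ⋂_{k=0}^{n₁-1} ker(ℋ_o·𝒜_oᵏ) = {0}). -/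
import Mathlib


/-- in a Kalman observability decomposition with
`0 < n₁ < n`, the reduced pair `(𝒜_o, ℋ_o)` (top-left `n₁ × n₁` block of
`𝒜 = T A T⁻¹` and first `n₁` columns of `ℋ = H_s T⁻¹`) is completely
observable: the kernel of its observability matrix is trivial
(equivalently, it has rank `n₁`). -/
theorem kalman_decomposition_observable_part_is_observable
    (n ms n₁ : ℕ) (A : Matrix (Fin n) (Fin n) ℝ) (Hs : Matrix (Fin ms) (Fin n) ℝ)
    (O : Matrix (Fin n × Fin ms) (Fin n) ℝ)
    (hO : O = fun p j => (Hs * A ^ (p.1 : ℕ)) p.2 j)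
    (hpos : 0 < n₁) (hlt : n₁ < n) (hrank : O.rank = n₁)
    (T : Matrix (Fin n) (Fin n) ℝ) (hT : IsUnit T)
    (𝒜 : Matrix (Fin n) (Fin n) ℝ) (h𝒜 : 𝒜 = T * A * T⁻¹)
    (ℋ : Matrix (Fin ms) (Fin n) ℝ) (hℋ : ℋ = Hs * T⁻¹)
    (htri : ∀ i j : Fin n, (i : ℕ) < n₁ → n₁ ≤ (j : ℕ) → 𝒜 i j = 0)
    (hcol : ∀ (i : Fin ms) (j : Fin n), n₁ ≤ (j : ℕ) → ℋ i j = 0)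
    (hunobs : ∀ x : Fin n → ℝ,
      (∀ k : ℕ, k < n → (Hs * A ^ k).mulVec x = 0) ↔
      (∀ i : Fin n, (i : ℕ) < n₁ → T.mulVec x i = 0))
    (𝒜o : Matrix (Fin n₁) (Fin n₁) ℝ)
    (h𝒜o : 𝒜o = fun i j => 𝒜 (Fin.castLE hlt.le i) (Fin.castLE hlt.le j))
    (ℋo : Matrix (Fin ms) (Fin n₁) ℝ)
    (hℋo : ℋo = fun i j => ℋ i (Fin.castLE hlt.le j)) :
    ∀ y : Fin n₁ → ℝ, (∀ k : ℕ, k < n₁ → (ℋo * 𝒜o ^ k).mulVec y = 0) → y = 0 := by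
  intro y hy
  have hdet : IsUnit T.det := (Matrix.isUnit_iff_isUnit_det T).mp hT
  have hTT : T * T⁻¹ = 1 := Matrix.mul_nonsing_inv T hdet
  have hTT' : T⁻¹ * T = 1 := Matrix.nonsing_inv_mul T hdet
  -- Sum reduction lemma
  have key : ∀ g : Fin n → ℝ, (∀ j : Fin n, n₁ ≤ (j : ℕ) → g j = 0) →
      ∑ j : Fin n, g j = ∑ j : Fin n₁, g (Fin.castLE hlt.le j) := by
    intro g hg
    rw [← Finset.sum_image (s := (Finset.univ : Finset (Fin n₁)))
        (g := Fin.castLE hlt.le) (f := g)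
        (fun a _ b _ h => Fin.castLE_injective _ h)]
    refine (Finset.sum_subset (Finset.subset_univ _) ?_).symm
    intro j _ hj
    apply hg
    by_contra hlt'
    push_neg at hlt'
    exact hj (Finset.mem_image.mpr ⟨⟨(j : ℕ), hlt'⟩, Finset.mem_univ _, rfl⟩)
  -- The zero-extended vector
  set z : Fin n → ℝ := fun i => if h : (i : ℕ) < n₁ then y ⟨(i : ℕ), h⟩ else 0 with hz
  -- Top components of powers acting on z
  have hpow : ∀ k : ℕ, ∀ i : Fin n, ∀ h : (i : ℕ) < n₁,
      (𝒜 ^ k).mulVec z i = (𝒜o ^ k).mulVec y ⟨(i : ℕ), h⟩ := by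
    intro k
    induction k with
    | zero =>
      intro i h
      simp only [pow_zero, Matrix.one_mulVec, hz]
      rw [dif_pos h]
    | succ k ih =>
      intro i h
      rw [pow_succ', ← Matrix.mulVec_mulVec, pow_succ', ← Matrix.mulVec_mulVec]
      show ∑ j : Fin n, 𝒜 i j * (𝒜 ^ k).mulVec z j = _
      rw [key (fun j => 𝒜 i j * (𝒜 ^ k).mulVec z j)
          (fun j hj => by show 𝒜 i j * _ = 0; rw [htri i j h hj, zero_mul])]
      show _ = ∑ j : Fin n₁, 𝒜o ⟨(i : ℕ), h⟩ j * (𝒜o ^ k).mulVec y j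
      refine Finset.sum_congr rfl fun j _ => ?_
      rw [ih (Fin.castLE hlt.le j) j.isLt, h𝒜o]
      rfl
  -- ℋ 𝒜^k z = ℋo 𝒜o^k y
  have hcomb : ∀ k : ℕ, (ℋ * 𝒜 ^ k).mulVec z = (ℋo * 𝒜o ^ k).mulVec y := by
    intro k
    funext i
    rw [← Matrix.mulVec_mulVec, ← Matrix.mulVec_mulVec]
    show ∑ j : Fin n, ℋ i j * (𝒜 ^ k).mulVec z j = ∑ j : Fin n₁, ℋo i j * (𝒜o ^ k).mulVec y j
    rw [key (fun j => ℋ i j * (𝒜 ^ k).mulVec z j)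
        (fun j hj => by show ℋ i j * _ = 0; rw [hcol i j hj, zero_mul])]
    refine Finset.sum_congr rfl fun j _ => ?_
    rw [hpow k (Fin.castLE hlt.le j) j.isLt, hℋo]
    rfl
  -- Extend hy to all powers via Cayley–Hamilton
  have hall : ∀ k : ℕ, (ℋo * 𝒜o ^ k).mulVec y = 0 := by
    intro k
    have hmon : (𝒜o).charpoly.Monic := Matrix.charpoly_monic 𝒜o
    have hdeg : ((Polynomial.X ^ k %ₘ 𝒜o.charpoly)).natDegree < n₁ := by
      have h1 : 𝒜o.charpoly ≠ 1 := by
        intro hcon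
        have := Matrix.charpoly_natDegree_eq_dim 𝒜o
        rw [hcon] at this
        simp [Fintype.card_fin] at this
        omega
      have := Polynomial.natDegree_modByMonic_lt (Polynomial.X ^ k) hmon h1
      rwa [Matrix.charpoly_natDegree_eq_dim, Fintype.card_fin] at this
    rw [Matrix.pow_eq_aeval_mod_charpoly, Polynomial.aeval_eq_sum_range' hdeg,
      Matrix.mul_sum]
    have sum_mulVec : ∀ (s : Finset ℕ) (f : ℕ → Matrix (Fin ms) (Fin n₁) ℝ),
        (∑ a ∈ s, f a).mulVec y = ∑ a ∈ s, (f a).mulVec y := by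
      intro s f
      funext i
      simp only [Matrix.mulVec, dotProduct, Finset.sum_apply, Finset.sum_mul,
        Matrix.sum_apply]
      rw [Finset.sum_comm]
    rw [sum_mulVec]
    refine Finset.sum_eq_zero fun i hi => ?_
    rw [Matrix.mul_smul, Matrix.smul_mulVec, hy i (Finset.mem_range.mp hi),
      smul_zero]
  -- conjugation identity
  have hpowT : ∀ k : ℕ, 𝒜 ^ k = T * A ^ k * T⁻¹ := by
    intro k
    induction k with
    | zero => simp [hTT]
    | succ k ih =>
      rw [pow_succ, ih, h𝒜, pow_succ]
      calc T * A ^ k * T⁻¹ * (T * A * T⁻¹)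
          = T * A ^ k * (T⁻¹ * T) * A * T⁻¹ := by
            simp only [Matrix.mul_assoc]
        _ = T * (A ^ k * A) * T⁻¹ := by rw [hTT']; simp only [Matrix.mul_assoc, Matrix.one_mul]
  -- the candidate unobservable vector
  have hx : ∀ k : ℕ, k < n → (Hs * A ^ k).mulVec (T⁻¹.mulVec z) = 0 := by
    intro k _
    rw [Matrix.mulVec_mulVec]
    have : Hs * A ^ k * T⁻¹ = ℋ * 𝒜 ^ k := by
      rw [hℋ, hpowT k]
      calc Hs * A ^ k * T⁻¹ = Hs * (T⁻¹ * T) * A ^ k * T⁻¹ := by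
            rw [hTT']; simp only [Matrix.mul_one]
        _ = Hs * T⁻¹ * (T * A ^ k * T⁻¹) := by simp only [Matrix.mul_assoc]
    rw [this, hcomb k, hall k]
  have hcoord := (hunobs (T⁻¹.mulVec z)).mp hx
  have hTz : T.mulVec (T⁻¹.mulVec z) = z := by
    rw [Matrix.mulVec_mulVec, hTT, Matrix.one_mulVec]
  funext j
  have := hcoord (Fin.castLE hlt.le j) j.isLt
  rw [hTz] at this
  simpa [hz] using this
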